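/- Let n ≥ 2 and let N_1, …, N_n be closed subspaces of a complex Hilbert space H such that c(N_1, …, N_n) = 0. Then the family {N_1, …, N_n} is perpendicular, i.e. N_i ∩ (N_i ∩ N_j)^⊥ is orthogonal to N_j ∩ (N_i ∩ N_j)^⊥ for all 1 ≤ i < j ≤ n (equivalently, the orthogonal projections P_{N_1}, …, P_{N_n} pairwise commute). -/

import Mathlib

/-- The cosine `c(N₁, …, Nₙ)` of a finite family of subspaces of a complex Hilbert space. -/
noncomputable def cosine {H : Type*} [NormedAddCommGroup H] [InnerProductSpace ℂ H]
    {n : ℕ} (N : Fin n → Submodule ℂ H) : ℝ :=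
  sSup {c : ℝ | ∃ x : Fin n → H,
    (∀ i, x i ∈ (N i)ᗮ ⊓ (∑ j, N j).topologicalClosure) ∧ x ≠ 0 ∧
    c = (1 / ((n : ℝ) - 1)) *
        (∑ i, ∑ j ∈ Finset.univ.erase i, ((inner ℂ (x i) (x j) : ℂ)).re) /
        (∑ i, ‖x i‖ ^ 2)}

/-!
Write `M` for the closure of `N₁ + ⋯ + Nₙ`. Since
`Σ_{k ≠ l} Re ⟪xₖ, xₗ⟫ = ‖Σ xₖ‖² - Σ ‖xₖ‖² ≤ (n - 1) Σ ‖xₖ‖²`, every cosine ratio is at most `1`,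
so the `sSup` defining `c` is a genuine supremum. If `c = 0` and `i ≠ j`, then `Nᵢᗮ ∩ M` is
orthogonal to `Nⱼᗮ ∩ M`: otherwise the tuple with `a` in slot `i`, `⟪b, a⟫ • b` in slot `j` and
zeros elsewhere has ratio `2 |⟪a, b⟫|² / ((n - 1) Σ ‖xₖ‖²) > 0`.

Now for `v ∈ Nⱼ` the vector `w = v - P_{Nᵢ} v` lies in `Nᵢᗮ ∩ M ⊆ (Nⱼᗮ ∩ M)ᗮ ∩ M = Nⱼ`, so
`P_{Nᵢ} v ∈ Nᵢ ∩ Nⱼ`, and `⟪u, v⟫ = ⟪u, P_{Nᵢ} v⟫ + ⟪u, w⟫ = 0` for `u ∈ Nᵢ ∩ (Nᵢ ∩ Nⱼ)ᗮ`.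
-/

open Finset InnerProductSpace

theorem norm_sum_sq_le_card_mul_sum_norm_sq {ι E : Type*} [SeminormedAddCommGroup E]
    (s : Finset ι) (x : ι → E) :
    ‖∑ i ∈ s, x i‖ ^ 2 ≤ #s * ∑ i ∈ s, ‖x i‖ ^ 2 :=
  (pow_le_pow_left₀ (norm_nonneg _) (norm_sum_le s x) 2).trans (sq_sum_le_card_mul_sum_sq ..)

section Cosine

variable {H : Type*} [NormedAddCommGroup H] [InnerProductSpace ℂ H]

theorem sum_sum_erase_re_inner {ι : Type*} [Fintype ι] [DecidableEq ι] (x : ι → H) :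
    ∑ i, ∑ j ∈ univ.erase i, (inner ℂ (x i) (x j)).re = ‖∑ i, x i‖ ^ 2 - ∑ i, ‖x i‖ ^ 2 := by
  have hsq : ‖∑ i, x i‖ ^ 2 = ∑ i, ∑ j, (inner ℂ (x i) (x j)).re := by
    simp only [@norm_sq_eq_re_inner ℂ, sum_inner, inner_sum, RCLike.re_to_complex,
      Complex.re_sum]
    exact sum_comm
  rw [hsq, eq_sub_iff_add_eq, ← sum_add_distrib]
  refine sum_congr rfl fun i _ => ?_
  rw [← add_sum_erase _ _ (mem_univ i), @norm_sq_eq_re_inner ℂ, RCLike.re_to_complex, add_comm]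

variable {n : ℕ}

theorem cosine_ratio_le_one (hn : 2 ≤ n) (x : Fin n → H) :
    1 / ((n : ℝ) - 1) * (∑ i, ∑ j ∈ univ.erase i, (inner ℂ (x i) (x j)).re) /
      (∑ i, ‖x i‖ ^ 2) ≤ 1 := by
  have hn1 : (0 : ℝ) < n - 1 := sub_pos.mpr (Nat.one_lt_cast.mpr hn)
  rw [sum_sum_erase_re_inner]
  rcases (sum_nonneg fun i (_ : i ∈ univ) => sq_nonneg ‖x i‖).eq_or_lt with hD | hD
  · simp [← hD]
  have hS := norm_sum_sq_le_card_mul_sum_norm_sq univ x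
  rw [card_univ, Fintype.card_fin] at hS
  rw [div_le_one hD, one_div_mul_eq_div, div_le_iff₀ hn1]
  linarith

theorem le_cosine (hn : 2 ≤ n) (N : Fin n → Submodule ℂ H) (x : Fin n → H)
    (hx : ∀ i, x i ∈ (N i)ᗮ ⊓ (∑ j, N j).topologicalClosure) (hx0 : x ≠ 0) :
    1 / ((n : ℝ) - 1) * (∑ i, ∑ j ∈ univ.erase i, (inner ℂ (x i) (x j)).re) /
      (∑ i, ‖x i‖ ^ 2) ≤ cosine N :=
  le_csSup ⟨1, by rintro _ ⟨y, -, -, rfl⟩; exact cosine_ratio_le_one hn y⟩ ⟨x, hx, hx0, rfl⟩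

theorem isOrtho_orthogonal_inf_of_cosine_nonpos (hn : 2 ≤ n) (N : Fin n → Submodule ℂ H)
    (hc : cosine N ≤ 0) {i j : Fin n} (hij : i ≠ j) :
    (N i)ᗮ ⊓ (∑ k, N k).topologicalClosure ⟂ (N j)ᗮ ⊓ (∑ k, N k).topologicalClosure := by
  rw [Submodule.isOrtho_iff_inner_eq]
  intro a ha b hb
  by_contra hz
  have ha0 : a ≠ 0 := by rintro rfl; exact hz (inner_zero_left (𝕜 := ℂ) b)
  set x : Fin n → H := Pi.single i a + Pi.single j (inner ℂ b a • b) with hx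
  have hxN : ∀ k, x k ∈ (N k)ᗮ ⊓ (∑ k, N k).topologicalClosure := by
    intro k
    refine add_mem ?_ ?_ <;> rw [Pi.single_apply] <;> split_ifs with h
    · exact h ▸ ha
    · exact zero_mem _
    · exact h ▸ Submodule.smul_mem _ _ hb
    · exact zero_mem _
  have hx0 : x ≠ 0 := fun h => ha0 (by simpa [hx, hij] using congrFun h i)
  have hsum : ∑ k, x k = a + inner ℂ b a • b := by simp [hx, sum_add_distrib]
  have hnorm : ∑ k, ‖x k‖ ^ 2 = ‖a‖ ^ 2 + ‖inner ℂ b a • b‖ ^ 2 := by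
    rw [Fintype.sum_eq_add i j hij fun k hk => by simp [hx, hk.1, hk.2]]
    simp [hx, hij, hij.symm]
  have hoff : ‖∑ k, x k‖ ^ 2 - ∑ k, ‖x k‖ ^ 2 = 2 * ‖inner ℂ a b‖ ^ 2 := by
    rw [hsum, hnorm, @norm_add_sq ℂ, inner_smul_right, ← inner_conj_symm, Complex.conj_mul',
      RCLike.re_to_complex]
    norm_cast
    ring
  have hratio := (le_cosine hn N x hxN hx0).trans hc
  rw [sum_sum_erase_re_inner, hoff] at hratio
  have hn1 : (0 : ℝ) < n - 1 := sub_pos.mpr (Nat.one_lt_cast.mpr hn)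
  have : 0 < ∑ k, ‖x k‖ ^ 2 := by rw [hnorm]; positivity
  have : 0 < ‖inner ℂ a b‖ := norm_pos_iff.mpr hz
  exact hratio.not_gt (by positivity)

end Cosine

namespace Submodule

variable {𝕜 E : Type*} [RCLike 𝕜] [NormedAddCommGroup E] [InnerProductSpace 𝕜 E]

theorem inf_orthogonal_inf_orthogonal_le {K M : Submodule 𝕜 E} [K.HasOrthogonalProjection]
    (hKM : K ≤ M) : M ⊓ (Kᗮ ⊓ M)ᗮ ≤ K := by
  rintro w ⟨hwM, hw⟩
  set r := w - K.starProjection w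
  have hr : r ∈ Kᗮ ⊓ M :=
    ⟨sub_starProjection_mem_orthogonal w, sub_mem hwM (hKM (starProjection_apply_mem K w))⟩
  have hr0 : inner 𝕜 r r = 0 := by
    rw [inner_sub_right, inner_right_of_mem_orthogonal hr hw,
      inner_left_of_mem_orthogonal (starProjection_apply_mem K w) hr.1, sub_zero]
  rw [← starProjection_eq_self_iff, eq_comm, ← sub_eq_zero]
  exact inner_self_eq_zero.mp hr0

theorem isOrtho_inf_orthogonal_inf_of_isOrtho_orthogonal_inf {A B M : Submodule 𝕜 E}
    [A.HasOrthogonalProjection] [B.HasOrthogonalProjection] (hA : A ≤ M) (hB : B ≤ M)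
    (h : Aᗮ ⊓ M ⟂ Bᗮ ⊓ M) : A ⊓ (A ⊓ B)ᗮ ⟂ B ⊓ (A ⊓ B)ᗮ := by
  rw [isOrtho_iff_inner_eq]
  rintro u ⟨huA, huAB⟩ v ⟨hvB, -⟩
  set w := v - A.starProjection v
  have hwA : w ∈ Aᗮ ⊓ M :=
    ⟨sub_starProjection_mem_orthogonal v, sub_mem (hB hvB) (hA (starProjection_apply_mem A v))⟩
  have hwB : w ∈ B := inf_orthogonal_inf_orthogonal_le hB ⟨hwA.2, h hwA⟩
  have hPv : A.starProjection v ∈ A ⊓ B :=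
    ⟨starProjection_apply_mem A v, by simpa [w] using sub_mem hvB hwB⟩
  calc inner 𝕜 u v = inner 𝕜 u (A.starProjection v) + inner 𝕜 u w := by
        rw [← inner_add_right, add_sub_cancel]
    _ = 0 := by
      rw [inner_left_of_mem_orthogonal hPv huAB, inner_right_of_mem_orthogonal huA hwA.1,
        add_zero]

end Submodule

/-- If `n ≥ 2` closed subspaces `N₁, …, Nₙ` of a complex Hilbert space
satisfy `c(N₁, …, Nₙ) = 0`, then the family is perpendicular: for all `i < j`, the subspaces
`Nᵢ ⊓ (Nᵢ ⊓ Nⱼ)ᗮ` and `Nⱼ ⊓ (Nᵢ ⊓ Nⱼ)ᗮ` are mutually orthogonal. -/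
theorem stmt_11 {H : Type*} [NormedAddCommGroup H] [InnerProductSpace ℂ H] [CompleteSpace H]
    {n : ℕ} (hn : 2 ≤ n) (N : Fin n → Submodule ℂ H)
    (hNc : ∀ i, IsClosed ((N i : Set H)))
    (hc : cosine N = 0) :
    ∀ i j : Fin n, i < j →
      ∀ x ∈ N i ⊓ (N i ⊓ N j)ᗮ, ∀ y ∈ N j ⊓ (N i ⊓ N j)ᗮ, (inner ℂ x y : ℂ) = 0 := by
  intro i j hij
  have := (hNc i).completeSpace_coe
  have := (hNc j).completeSpace_coe
  have hle : ∀ k, N k ≤ (∑ l, N l).topologicalClosure := fun k =>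
    (single_le_sum (fun _ _ => bot_le) (mem_univ k)).trans (Submodule.le_topologicalClosure _)
  rw [← Submodule.isOrtho_iff_inner_eq]
  exact Submodule.isOrtho_inf_orthogonal_inf_of_isOrtho_orthogonal_inf (hle i) (hle j)
    (isOrtho_orthogonal_inf_of_cosine_nonpos hn N hc.le hij.ne)
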